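/- arXiv:1404.2741 — 3 statements merged into one kernel-verified Lean document; each statement's English description precedes it below -/
import Mathlib

section
/- Let q be a prime power, let s ≥ 1 and let 1 ≤ t ≤ s. The set of polynomials p ∈ F_q[x_1,…,x_s] such that p(v) = 0 for every v ∈ (F_q)^s of Hamming weight at most t is exactly the ideal of F_q[x_1,…,x_s] generated by {σ_{t+1},…,σ_s} ∪ {x_1^q − x_1,…,x_s^q − x_s} (where for t = s the set of elementary symmetric polynomials taken is empty, so the ideal is generated by the field equations alone). -/
/-!
By the combinatorial Nullstellensatz, a polynomial vanishing on all of `K^s` lies in the ideal `I`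
of field equations, so modulo `I` every polynomial `p` is `∑ᵥ p(v) · 1_v`, where `1_v` is the
indicator polynomial of the point `v`. The elementary symmetric polynomial `σ_n` vanishes at points
of weight `< n`, while `σ_{w(v)}(v)` is the product of the nonzero coordinates of `v`. Hence
`1_v · σ_{w(v)} ≡ σ_{w(v)}(v) · 1_v` shows that `1_v` lies in the ideal whenever `w(v) > t`.
-/

open MvPolynomial Finset

theorem FiniteField.prod_X_sub_C_eq_X_pow_card_sub_X {K : Type*} [Field K] [Fintype K] :
    ∏ a : K, (Polynomial.X - Polynomial.C a) =
      (Polynomial.X ^ Fintype.card K - Polynomial.X : Polynomial K) := by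
  have hmonic : (Polynomial.X ^ Fintype.card K - Polynomial.X : Polynomial K).Monic :=
    Polynomial.monic_X_pow_sub (by
      rw [Polynomial.degree_X]; exact_mod_cast Fintype.one_lt_card)
  have := Polynomial.prod_multiset_X_sub_C_of_monic_of_roots_card_eq hmonic (by
    rw [roots_X_pow_card_sub_X, X_pow_card_sub_X_natDegree_eq K Fintype.one_lt_card]; rfl)
  rwa [roots_X_pow_card_sub_X] at this

namespace MvPolynomial

section FieldEquations

variable {σ K : Type*} [Field K] [Fintype K]

variable (σ K) in
noncomputable abbrev fieldEquationsIdeal : Ideal (MvPolynomial σ K) :=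
  Ideal.span (Set.range fun i => X i ^ Fintype.card K - X i)

theorem prod_X_sub_C_eq_X_pow_card_sub_X (i : σ) :
    ∏ a : K, (X i - C a : MvPolynomial σ K) = X i ^ Fintype.card K - X i := by
  simpa [algebraMap_eq] using
    congr_arg (Polynomial.aeval (X i : MvPolynomial σ K))
      (FiniteField.prod_X_sub_C_eq_X_pow_card_sub_X (K := K))

theorem mem_fieldEquationsIdeal_of_forall_eval_eq_zero [Finite σ] {f : MvPolynomial σ K}
    (hf : ∀ x, eval x f = 0) :
    f ∈ fieldEquationsIdeal σ K := by
  obtain ⟨h, -, rfl⟩ := combinatorial_nullstellensatz_exists_linearCombination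
    (fun _ => univ) (fun _ => univ_nonempty) f fun x _ => hf x
  simp_rw [prod_X_sub_C_eq_X_pow_card_sub_X]
  rw [fieldEquationsIdeal, Ideal.span, ← Finsupp.range_linearCombination]
  exact LinearMap.mem_range_self _ h

variable [Fintype σ] {J : Ideal (MvPolynomial σ K)}

theorem indicator_mem_of_eval_ne_zero (hJ : fieldEquationsIdeal σ K ≤ J)
    {g : MvPolynomial σ K} (hg : g ∈ J) {v : σ → K} (hv : eval v g ≠ 0) : indicator v ∈ J := by
  have hdiff : indicator v * g - C (eval v g) * indicator v ∈ J := by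
    refine hJ (mem_fieldEquationsIdeal_of_forall_eval_eq_zero fun w => ?_)
    by_cases hw : w = v
    · subst hw; simp [eval_indicator_apply_eq_one, mul_comm]
    · simp [eval_indicator_apply_eq_zero w v hw]
  have hc : C (eval v g) * indicator v ∈ J := by
    simpa using J.sub_mem (J.mul_mem_left (indicator v) hg) hdiff
  simpa [← mul_assoc, ← C_mul, hv] using J.mul_mem_left (C (eval v g)⁻¹) hc

theorem mem_of_forall_eval_ne_zero_indicator_mem (hJ : fieldEquationsIdeal σ K ≤ J)
    {p : MvPolynomial σ K} (hp : ∀ v, eval v p ≠ 0 → indicator v ∈ J) : p ∈ J := by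
  classical
  set g := ∑ v : σ → K, C (eval v p) * indicator v
  have hpg : p - g ∈ J := by
    refine hJ (mem_fieldEquationsIdeal_of_forall_eval_eq_zero fun w => ?_)
    rw [map_sub, sub_eq_zero, map_sum, Finset.sum_eq_single w]
    · simp [eval_indicator_apply_eq_one]
    · intro v _ hvw
      simp [eval_indicator_apply_eq_zero w v (Ne.symm hvw)]
    · simp
  have hg : g ∈ J := by
    refine J.sum_mem fun v _ => ?_
    by_cases hv : eval v p = 0
    · simp [hv]
    · exact J.mul_mem_left _ (hp v hv)
  simpa using J.add_mem hpg hg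

end FieldEquations

section ElementarySymmetric

variable {σ R : Type*} [Fintype σ] [CommSemiring R] [DecidableEq R]

theorem eval_esymm_eq_sum_powersetCard_support (v : σ → R) (n : ℕ) :
    eval v (esymm σ R n) = ∑ A ∈ powersetCard n {i | v i ≠ 0}, ∏ j ∈ A, v j := by
  rw [esymm, map_sum]
  simp_rw [map_prod, eval_X]
  refine (Finset.sum_subset (powersetCard_mono (subset_univ _)) fun A hA hA' => ?_).symm
  have hnot : ¬ A ⊆ ({i | v i ≠ 0} : Finset σ) := fun h =>
    hA' (mem_powersetCard.mpr ⟨h, (mem_powersetCard.mp hA).2⟩)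
  obtain ⟨j, hjA, hj⟩ := Finset.not_subset.mp hnot
  exact Finset.prod_eq_zero hjA (by simpa using hj)

theorem eval_esymm_eq_zero_of_hammingNorm_lt {v : σ → R} {n : ℕ} (hn : hammingNorm v < n) :
    eval v (esymm σ R n) = 0 := by
  rw [eval_esymm_eq_sum_powersetCard_support, powersetCard_eq_empty.mpr hn, sum_empty]

theorem eval_esymm_hammingNorm_ne_zero [NoZeroDivisors R] [Nontrivial R] (v : σ → R) :
    eval v (esymm σ R (hammingNorm v)) ≠ 0 := by
  rw [eval_esymm_eq_sum_powersetCard_support, hammingNorm, powersetCard_self, sum_singleton,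
    prod_ne_zero_iff]
  simp

end ElementarySymmetric

end MvPolynomial

theorem stmt1_general {F : Type*} [Field F] [Fintype F] [DecidableEq F]
    (s t : ℕ) :
    {p : MvPolynomial (Fin s) F |
        ∀ v : Fin s → F, hammingNorm v ≤ t → MvPolynomial.eval v p = 0} =
      ↑(Ideal.span
        ((fun i : ℕ => MvPolynomial.esymm (Fin s) F i) '' {i : ℕ | t + 1 ≤ i ∧ i ≤ s} ∪
          Set.range fun i : Fin s =>
            MvPolynomial.X i ^ Fintype.card F - MvPolynomial.X i)) := by
  have hI := Ideal.span_mono (α := MvPolynomial (Fin s) F)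
    (Set.subset_union_right (s := (fun i : ℕ => esymm (Fin s) F i) '' {i | t + 1 ≤ i ∧ i ≤ s})
      (t := Set.range fun i : Fin s => X i ^ Fintype.card F - X i))
  ext p
  refine ⟨fun hp => mem_of_forall_eval_ne_zero_indicator_mem hI fun v hv => ?_, fun hp v hv => ?_⟩
  · have hweight : t + 1 ≤ hammingNorm v := lt_of_not_ge fun h => hv (hp v h)
    have hle : hammingNorm v ≤ s := by simpa using hammingNorm_le_card_fintype (x := v)
    exact indicator_mem_of_eval_ne_zero hI (Ideal.subset_span (Or.inl ⟨_, ⟨hweight, hle⟩, rfl⟩))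
      (eval_esymm_hammingNorm_ne_zero v)
  · refine (Ideal.span_le (I := RingHom.ker (eval v))).mpr ?_ hp
    rintro _ (⟨i, ⟨hi, -⟩, rfl⟩ | ⟨i, rfl⟩)
    · exact eval_esymm_eq_zero_of_hammingNorm_lt (by omega)
    · simp [FiniteField.pow_card]

/-- Let `q` be a prime power (here a finite field `F` with
`q = Fintype.card F`), let `s ≥ 1` and `1 ≤ t ≤ s`.  The set of polynomials
`p ∈ F_q[x_1,…,x_s]` vanishing on every `v ∈ (F_q)^s` of Hamming weight at most `t`
is exactly the ideal generated by `{σ_{t+1},…,σ_s}` together with the field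
equations `x_i^q − x_i` (for `t = s` the set of elementary symmetric polynomials
taken is empty). -/
theorem stmt1 {F : Type*} [Field F] [Fintype F] [DecidableEq F]
    (s t : ℕ) (hs : 1 ≤ s) (ht1 : 1 ≤ t) (hts : t ≤ s) :
    {p : MvPolynomial (Fin s) F |
        ∀ v : Fin s → F, hammingNorm v ≤ t → MvPolynomial.eval v p = 0} =
      ↑(Ideal.span
        ((fun i : ℕ => MvPolynomial.esymm (Fin s) F i) '' {i : ℕ | t + 1 ≤ i ∧ i ≤ s} ∪
          Set.range fun i : Fin s =>
            MvPolynomial.X i ^ Fintype.card F - MvPolynomial.X i)) :=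
  stmt1_general s t
end

section
/- Let f : F_2^n → F_2 be a Boolean function, identified with a function F_2^n → {0,1} ⊂ ℚ. Define the polynomial P ∈ ℚ[a_0,a_1,…,a_n], P = Σ_{v∈{0,1}^{n+1}} c_v a_0^{v_0}a_1^{v_1}···a_n^{v_n}, where c_0 = w(f) (the Hamming weight of f) and, for v = (v_0,v_1,…,v_n) ≠ 0 with ṽ = (v_1,…,v_n), c_v = (−2)^{w(v)} Σ_{u ∈ F_2^n, ṽ ⪯ u} ( f(u) − 1/2 ). Then for every â = (â_0,…,â_n) ∈ {0,1}^{n+1}, P(â) equals the Hamming distance d(f, α_â) between f and the affine Boolean function α_â(x) = â_0 + â_1x_1 + … + â_nx_n (coefficients reduced mod 2). -/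
open MvPolynomial

/-- The affine Boolean function `x ↦ a_0 + a_1 x_1 + … + a_n x_n` determined by the
coefficient vector `a ∈ F_2^{n+1}`. -/
def affineFun (n : ℕ) (a : Fin (n + 1) → ZMod 2) : (Fin n → ZMod 2) → ZMod 2 :=
  fun x => a 0 + ∑ i : Fin n, a i.succ * x i

/-- The coefficient `c_v` of the nonlinearity polynomial, where the `{0,1}`-vector
`v ∈ {0,1}^{n+1}` is encoded by its support `S ⊆ {0,…,n}`:
`c_0 = w(f)` and, for `v ≠ 0` with `ṽ = (v_1,…,v_n)`,
`c_v = (−2)^{w(v)} Σ_{u ∈ F_2^n, ṽ ⪯ u} (f(u) − 1/2)`. -/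
def nlCoeff (n : ℕ) (f : (Fin n → ZMod 2) → ZMod 2) (S : Finset (Fin (n + 1))) : ℚ :=
  if S = ∅ then
    ((Finset.univ.filter fun v : Fin n → ZMod 2 => f v = 1).card : ℚ)
  else
    (-2 : ℚ) ^ S.card *
      ∑ u ∈ Finset.univ.filter
          (fun u : Fin n → ZMod 2 => ∀ i : Fin n, i.succ ∈ S → u i = 1),
        (((f u).val : ℚ) - 1 / 2)

/-- The polynomial `P = Σ_{v ∈ {0,1}^{n+1}} c_v a_0^{v_0} ⋯ a_n^{v_n}`. -/
noncomputable def nlPoly (n : ℕ) (f : (Fin n → ZMod 2) → ZMod 2) :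
    MvPolynomial (Fin (n + 1)) ℚ :=
  ∑ S : Finset (Fin (n + 1)), C (nlCoeff n f S) * ∏ i ∈ S, X i

/-!
Evaluating at `â` kills every monomial `∏_{i ∈ S} a_i` with `S ⊄ supp â`. Exchanging the sums over
`S` and `u`, each `u` contributes `(f(u) − 1/2) Σ_{S ⊆ T} (−2)^{|S|} = (f(u) − 1/2)(−1)^{|T|}` with
`T = supp â ∩ supp (1, u)`, and `|T| ≡ α_â(u) (mod 2)`; the weight `c_∅ = w(f)` supplies the
missing `Σ_u 1/2`. Hence `P(â) = Σ_u ((f(u) − 1/2)(1 − 2α_â(u)) + 1/2) = Σ_u [f(u) ≠ α_â(u)]`.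
-/

open Finset

lemma ZMod.natCast_val_two_eq_ite {R : Type*} [AddMonoidWithOne R] (z : ZMod 2) :
    (z.val : R) = if z = 1 then 1 else 0 := by
  obtain rfl | rfl : z = 0 ∨ z = 1 := by decide +revert
  · simp
  · simp [ZMod.val_one]

lemma ZMod.sum_mul_eq_card_filter {ι : Type*} (s : Finset ι) (a x : ι → ZMod 2) :
    ∑ j ∈ s, a j * x j = #{j ∈ s | a j = 1 ∧ x j = 1} := by
  rw [card_filter, Nat.cast_sum]
  refine sum_congr rfl fun j _ => ?_
  generalize a j = b, x j = y
  fin_cases b <;> fin_cases y <;> decide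

lemma neg_one_pow_eq_one_sub_two_mul_val {R : Type*} [Ring R] (k : ℕ) :
    (-1 : R) ^ k = 1 - 2 * ((k : ZMod 2).val : R) := by
  rw [ZMod.val_natCast, neg_one_pow_eq_pow_mod_two]
  rcases Nat.mod_two_eq_zero_or_one k with h | h <;> norm_num [h]

lemma Finset.sum_ite_subset_pow_card {ι R : Type*} [Fintype ι] [DecidableEq ι] [CommSemiring R]
    (x : R) (T : Finset ι) :
    ∑ S : Finset ι, (if S ⊆ T then x ^ #S else 0) = (x + 1) ^ #T := by
  rw [← sum_filter, filter_subset_univ]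
  simpa using sum_pow_mul_eq_add_pow x 1 T

lemma hammingDist_eq_sum_ite {ι β R : Type*} [Fintype ι] [DecidableEq β] [AddCommMonoidWithOne R]
    (x y : ι → β) :
    (hammingDist x y : R) = ∑ i, if x i = y i then 0 else 1 := by
  simp [hammingDist, card_filter, ite_not]

lemma ZMod.val_sub_half_mul_add_half (x y : ZMod 2) :
    ((x.val : ℚ) - 1 / 2) * (1 - 2 * (y.val : ℚ)) + 1 / 2 = if x = y then 0 else 1 := by
  obtain rfl | rfl : x = 0 ∨ x = 1 := by decide +revert
  all_goals obtain rfl | rfl : y = 0 ∨ y = 1 := by decide +revert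
  all_goals norm_num [ZMod.val_one]

section

variable (n : ℕ) (f : (Fin n → ZMod 2) → ZMod 2) (a : Fin (n + 1) → ZMod 2) (u : Fin n → ZMod 2)

def affineSupport : Finset (Fin (n + 1)) :=
  {j | a j = 1 ∧ (Fin.cons 1 u : Fin (n + 1) → ZMod 2) j = 1}

lemma affineFun_eq_card_affineSupport :
    affineFun n a u = #(affineSupport n a u) := by
  rw [affineSupport, ← ZMod.sum_mul_eq_card_filter, Fin.sum_univ_succ]
  simp [affineFun]

lemma subset_affineSupport_iff (S : Finset (Fin (n + 1))) :
    S ⊆ affineSupport n a u ↔ (∀ i : Fin n, i.succ ∈ S → u i = 1) ∧ ∀ j ∈ S, a j = 1 := by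
  simp only [affineSupport, subset_iff, mem_filter, mem_univ, true_and]
  constructor
  · intro h
    exact ⟨fun i hi => by simpa using (h hi).2, fun j hj => (h hj).1⟩
  · rintro ⟨hu, ha⟩ j hj
    refine ⟨ha j hj, ?_⟩
    cases j using Fin.cases with
    | zero => rfl
    | succ i => simpa using hu i hj

lemma eval_nlPoly :
    eval (fun i => ((a i).val : ℚ)) (nlPoly n f) =
      ∑ S, nlCoeff n f S * if ∀ j ∈ S, a j = 1 then 1 else 0 := by
  simp only [nlPoly, map_sum, map_mul, eval_C, map_prod, eval_X, ZMod.natCast_val_two_eq_ite,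
    prod_boole]
  congr!

lemma nlCoeff_mul_ite (S : Finset (Fin (n + 1))) :
    (nlCoeff n f S * if ∀ j ∈ S, a j = 1 then 1 else 0) =
      ∑ u, ((f u).val - 1 / 2 : ℚ) * (if S ⊆ affineSupport n a u then (-2) ^ #S else 0) +
        if S = ∅ then ∑ _u : Fin n → ZMod 2, (1 / 2 : ℚ) else 0 := by
  by_cases hS : S = ∅
  · subst hS
    rw [nlCoeff, if_pos rfl, if_pos rfl, card_filter, Nat.cast_sum, ← sum_add_distrib]
    simp only [notMem_empty, IsEmpty.forall_iff, implies_true, if_true, mul_one, empty_subset,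
      card_empty, pow_zero, ZMod.natCast_val_two_eq_ite]
    refine sum_congr rfl fun u _ => ?_
    split_ifs <;> norm_num
  · rw [nlCoeff, if_neg hS, if_neg hS, add_zero, sum_filter, mul_sum, sum_mul]
    refine sum_congr rfl fun u _ => ?_
    simp only [subset_affineSupport_iff]
    split_ifs <;> first | (exfalso; tauto) | ring

lemma eval_nlPoly_eq_sum :
    eval (fun i => ((a i).val : ℚ)) (nlPoly n f) =
      ∑ u, (((f u).val - 1 / 2 : ℚ) * (-1) ^ #(affineSupport n a u) + 1 / 2) := by
  rw [eval_nlPoly]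
  simp only [nlCoeff_mul_ite, sum_add_distrib, sum_ite_eq', mem_univ, if_true]
  rw [sum_comm]
  simp only [← mul_sum, sum_ite_subset_pow_card]
  norm_num

end

/-- For every `â ∈ {0,1}^{n+1}`, the value `P(â)` equals the Hamming
distance `d(f, α_â)` between `f` and the affine Boolean function
`α_â(x) = â_0 + â_1 x_1 + … + â_n x_n`. -/
theorem stmt4 (n : ℕ) (f : (Fin n → ZMod 2) → ZMod 2) :
    ∀ a : Fin (n + 1) → ZMod 2,
      MvPolynomial.eval (fun i => ((a i).val : ℚ)) (nlPoly n f) =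
        hammingDist f (affineFun n a) := by
  intro a
  rw [eval_nlPoly_eq_sum, hammingDist_eq_sum_ite]
  refine sum_congr rfl fun u _ => ?_
  rw [neg_one_pow_eq_one_sub_two_mul_val, ← affineFun_eq_card_affineSupport,
    ZMod.val_sub_half_mul_add_half]
end

section
/- Let f : F_2^n → F_2 be a Boolean function and write its nonlinearity polynomial as 𝔫_f = Σ_{v∈{0,1}^{n+1}} c_v a_0^{v_0}···a_n^{v_n}. Then every coefficient c_v satisfies |c_v| ≤ 2^n. -/
open Finset MvPolynomial

theorem AddChar.map_sum_eq_prod {ι A M : Type*} [AddCommMonoid A] [CommMonoid M]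
    (ψ : AddChar A M) (s : Finset ι) (t : ι → A) : ψ (∑ i ∈ s, t i) = ∏ i ∈ s, ψ (t i) := by
  induction s using Finset.cons_induction with
  | empty => simp
  | cons i s _ ih => rw [sum_cons, prod_cons, map_add_eq_mul, ih]

theorem Finsupp.eq_of_support_eq_of_le_one {σ : Type*} {m d : σ →₀ ℕ} (hm : ∀ i, m i ≤ 1)
    (hd : ∀ i, d i ≤ 1) (h : m.support = d.support) : m = d := by
  ext i
  have hi : m i ≠ 0 ↔ d i ≠ 0 := by simpa using congrArg (i ∈ ·) h
  have := hm i
  have := hd i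
  omega

theorem MvPolynomial.coeff_eq_zero_of_degreeOf_lt {σ R : Type*} [CommSemiring R]
    {P : MvPolynomial σ R} {d : σ →₀ ℕ} {i : σ} (h : P.degreeOf i < d i) : P.coeff d = 0 :=
  notMem_support_iff.1 fun hd => (degreeOf_le_iff.1 le_rfl d hd).not_gt h

section MoebiusInversion

variable {σ R : Type*} [DecidableEq σ] [CommRing R]

theorem sum_powerset_neg_one_pow_card_sdiff_mul_prod (D : Finset σ) (w : σ → R) :
    ∑ S ∈ D.powerset, (-1) ^ #(D \ S) * ∏ j ∈ S, w j = ∏ j ∈ D, (w j - 1) := by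
  simp_rw [sub_eq_add_neg, prod_add, prod_const, mul_comm]

theorem sum_powerset_neg_one_pow_card_sdiff_mul_ite_subset (A D : Finset σ) :
    ∑ S ∈ D.powerset, (-1 : R) ^ #(D \ S) * (if A ⊆ S then 1 else 0) =
      if A = D then 1 else 0 := by
  by_cases hAD : A ⊆ D
  · calc _ = ∑ S ∈ D.powerset, (∏ _j ∈ S, (1 : R)) * ∏ j ∈ D \ S, if j ∉ A then -1 else 0 := by
          refine sum_congr rfl fun S _ => ?_
          have hdisj : (∀ j ∈ D \ S, j ∉ A) ↔ A ⊆ S :=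
            ⟨fun h j hj => by_contra fun hjS => h j (mem_sdiff.2 ⟨hAD hj, hjS⟩) hj,
              fun h j hj hjA => (mem_sdiff.1 hj).2 (h hjA)⟩
          rw [prod_const_one, one_mul, prod_ite_zero, prod_const]
          simp only [hdisj, mul_ite, mul_one, mul_zero]
      _ = ∏ j ∈ D, (1 + if j ∉ A then -1 else 0) := (prod_add _ _ _).symm
      _ = ∏ j ∈ D, if j ∈ A then 1 else 0 :=
          prod_congr rfl fun j _ => by by_cases hj : j ∈ A <;> simp [hj]
      _ = if A = D then 1 else 0 := by
          rw [prod_boole]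
          exact if_congr ⟨fun h => hAD.antisymm h, fun h => h ▸ fun _ => id⟩ rfl rfl
  · rw [if_neg (by rintro rfl; exact hAD subset_rfl)]
    exact sum_eq_zero fun S hS => by
      rw [if_neg fun h => hAD (h.trans (mem_powerset.1 hS)), mul_zero]

theorem prod_ite_mem_pow_eq_ite_subset (S : Finset σ) (m : σ →₀ ℕ) :
    ∏ i ∈ m.support, (if i ∈ S then (1 : R) else 0) ^ m i = if m.support ⊆ S then 1 else 0 := by
  calc _ = ∏ i ∈ m.support, if i ∈ S then (1 : R) else 0 :=
        prod_congr rfl fun i hi => by rw [ite_pow, one_pow, zero_pow (Finsupp.mem_support_iff.1 hi)]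
    _ = _ := by rw [prod_boole]; exact if_congr subset_iff.symm rfl rfl

theorem MvPolynomial.coeff_eq_sum_powerset_neg_one_pow_mul_eval (P : MvPolynomial σ R)
    (hP : ∀ i, P.degreeOf i ≤ 1) {d : σ →₀ ℕ} (hd : ∀ i, d i ≤ 1) :
    P.coeff d = ∑ S ∈ d.support.powerset,
      (-1) ^ #(d.support \ S) * eval (fun i => if i ∈ S then 1 else 0) P := by
  have hmult : ∀ m ∈ P.support, ∀ i, m i ≤ 1 := fun m hm i => degreeOf_le_iff.1 (hP i) m hm
  simp_rw [eval_eq, prod_ite_mem_pow_eq_ite_subset, mul_sum]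
  rw [sum_comm]
  simp_rw [mul_left_comm _ (P.coeff _), ← mul_sum,
    sum_powerset_neg_one_pow_card_sdiff_mul_ite_subset]
  rw [sum_eq_single d]
  · simp
  · intro m hm hmd
    rw [if_neg fun h => hmd (Finsupp.eq_of_support_eq_of_le_one (hmult m hm) hd h), mul_zero]
  · intro hd
    rw [notMem_support_iff.1 hd, zero_mul]

end MoebiusInversion

def signChar : AddChar (ZMod 2) ℚ := AddChar.zmodChar 2 (by norm_num : (-1 : ℚ) ^ 2 = 1)

theorem signChar_one : signChar 1 = -1 := by
  simp [signChar, AddChar.zmodChar_apply, ZMod.val_one]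

theorem abs_signChar (u : ZMod 2) : |signChar u| = 1 := by
  obtain rfl | rfl : u = 0 ∨ u = 1 := by decide +revert
  all_goals norm_num [signChar_one]

theorem ite_ne_eq_one_sub_signChar_mul (u v : ZMod 2) :
    (if u ≠ v then 1 else 0 : ℚ) = (1 - signChar u * signChar v) / 2 := by
  obtain rfl | rfl : u = 0 ∨ u = 1 := by decide +revert
  all_goals obtain rfl | rfl : v = 0 ∨ v = 1 := by decide +revert
  all_goals norm_num [signChar_one]

theorem hammingDist_eq_sum_signChar {α : Type*} [Fintype α] (g h : α → ZMod 2) :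
    (hammingDist g h : ℚ) = ∑ x, (1 - signChar (g x) * signChar (h x)) / 2 := by
  rw [hammingDist, card_filter]
  push_cast
  simp_rw [ite_ne_eq_one_sub_signChar_mul]

section Affine

variable {n : ℕ}

def homogenize (x : Fin n → ZMod 2) : Fin (n + 1) → ZMod 2 := Fin.cons 1 x

theorem affineFun_eq_sum_mul_homogenize (a : Fin (n + 1) → ZMod 2) (x : Fin n → ZMod 2) :
    affineFun n a x = ∑ j, a j * homogenize x j := by
  simp [affineFun, homogenize, Fin.sum_univ_succ]

theorem signChar_affineFun_ite_mem (S : Finset (Fin (n + 1))) (x : Fin n → ZMod 2) :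
    signChar (affineFun n (fun j => if j ∈ S then 1 else 0) x) =
      ∏ j ∈ S, signChar (homogenize x j) := by
  rw [affineFun_eq_sum_mul_homogenize, AddChar.map_sum_eq_prod, ← Fintype.prod_ite_mem S]
  simp only [ite_mul, one_mul, zero_mul, apply_ite signChar, AddChar.map_zero_eq_one]

theorem sum_prod_abs_signChar_homogenize_sub_one_le (D : Finset (Fin (n + 1))) :
    ∑ x : Fin n → ZMod 2, ∏ j ∈ D, |signChar (homogenize x j) - 1| ≤
      2 ^ (n + 1) := by
  set g : Fin (n + 1) → ZMod 2 → ℚ := fun j u => if j ∈ D then |signChar u - 1| else 1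
  have hsplit : ∀ x : Fin n → ZMod 2,
      ∏ j ∈ D, |signChar (homogenize x j) - 1| =
        g 0 1 * ∏ i, g i.succ (x i) := fun x => by
    rw [← Fintype.prod_ite_mem, Fin.prod_univ_succ]
    simp [g, homogenize]
  have hg0 : g 0 1 ≤ 2 := by
    simp only [g, signChar_one]
    split_ifs <;> norm_num
  have hg : ∀ i : Fin n, ∑ u, g i.succ u = 2 := fun i => by
    rw [show (univ : Finset (ZMod 2)) = {0, 1} by decide, sum_pair zero_ne_one]
    simp only [g]
    split_ifs <;> norm_num [signChar_one]
  calc _ = g 0 1 * ∏ i : Fin n, ∑ u, g i.succ u := by simp_rw [hsplit, ← mul_sum, Fintype.prod_sum]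
    _ ≤ 2 ^ (n + 1) := by
      rw [prod_congr rfl fun i _ => hg i, prod_const, card_univ, Fintype.card_fin, pow_succ']
      gcongr

end Affine

def IsNonlinearityPolynomial {n : ℕ} (f : (Fin n → ZMod 2) → ZMod 2)
    (N : MvPolynomial (Fin (n + 1)) ℚ) : Prop :=
  (∀ i, N.degreeOf i ≤ 1) ∧ ∀ a : Fin (n + 1) → ZMod 2,
    eval (fun i => ((a i).val : ℚ)) N = (hammingDist f (affineFun n a) : ℚ)

section NonlinearityPolynomial

variable {n : ℕ} {f : (Fin n → ZMod 2) → ZMod 2} {N : MvPolynomial (Fin (n + 1)) ℚ}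

theorem IsNonlinearityPolynomial.abs_coeff_zero_le (hN : IsNonlinearityPolynomial f N) :
    |N.coeff 0| ≤ 2 ^ n := by
  have h := hN.2 0
  simp only [Pi.zero_apply, ZMod.val_zero, Nat.cast_zero] at h
  rw [← congrFun constantCoeff_eq N, ← eval_zero', h, abs_of_nonneg (Nat.cast_nonneg _)]
  exact_mod_cast (hammingDist_le_card_fintype).trans_eq (by simp)

theorem IsNonlinearityPolynomial.eval_ite_mem (hN : IsNonlinearityPolynomial f N)
    (S : Finset (Fin (n + 1))) :
    eval (fun i => if i ∈ S then 1 else 0) N = ∑ x, (1 - signChar (f x) *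
      ∏ j ∈ S, signChar (homogenize x j)) / 2 := by
  have h := hN.2 fun i => if i ∈ S then 1 else 0
  simp only [apply_ite ZMod.val, ZMod.val_one, ZMod.val_zero, apply_ite Nat.cast, Nat.cast_one,
    Nat.cast_zero] at h
  rw [h, hammingDist_eq_sum_signChar]
  simp_rw [signChar_affineFun_ite_mem]

theorem IsNonlinearityPolynomial.coeff_eq (hN : IsNonlinearityPolynomial f N)
    {d : Fin (n + 1) →₀ ℕ} (hd : ∀ i, d i ≤ 1) (hd0 : d ≠ 0) :
    N.coeff d = -(∑ x, signChar (f x) *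
      ∏ j ∈ d.support, (signChar (homogenize x j) - 1)) / 2 := by
  set D := d.support
  have hD : D.Nonempty := Finsupp.support_nonempty_iff.2 hd0
  have hmoebius_one : ∑ S ∈ D.powerset, (-1 : ℚ) ^ #(D \ S) = 0 := by
    simpa [hD.ne_empty] using sum_powerset_neg_one_pow_card_sdiff_mul_prod D fun _ => (1 : ℚ)
  rw [coeff_eq_sum_powerset_neg_one_pow_mul_eval N hN.1 hd, neg_div, sum_div, ← sum_neg_distrib]
  simp_rw [hN.eval_ite_mem, mul_sum]
  rw [sum_comm]
  refine sum_congr rfl fun x _ => ?_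
  rw [← sum_powerset_neg_one_pow_card_sdiff_mul_prod]
  calc _ = (∑ S ∈ D.powerset, (-1 : ℚ) ^ #(D \ S) - signChar (f x) * ∑ S ∈ D.powerset,
        (-1) ^ #(D \ S) * ∏ j ∈ S, signChar (homogenize x j)) / 2 := by
        rw [mul_sum, ← sum_sub_distrib, sum_div]
        exact sum_congr rfl fun _ _ => by ring
    _ = _ := by rw [hmoebius_one]; ring

theorem IsNonlinearityPolynomial.abs_coeff_le_of_ne_zero (hN : IsNonlinearityPolynomial f N)
    {d : Fin (n + 1) →₀ ℕ} (hd : ∀ i, d i ≤ 1) (hd0 : d ≠ 0) : |N.coeff d| ≤ 2 ^ n := by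
  rw [hN.coeff_eq hd hd0, abs_div, abs_neg, abs_two, div_le_iff₀ two_pos, ← pow_succ]
  calc _ ≤ ∑ x, |signChar (f x) *
        ∏ j ∈ d.support, (signChar (homogenize x j) - 1)| :=
        abs_sum_le_sum_abs _ _
    _ = ∑ x : Fin n → ZMod 2,
        ∏ j ∈ d.support, |signChar (homogenize x j) - 1| := by
        simp_rw [abs_mul, abs_signChar, one_mul, abs_prod]
    _ ≤ 2 ^ (n + 1) := sum_prod_abs_signChar_homogenize_sub_one_le _

end NonlinearityPolynomial

/-- Every coefficient `c_v` of the nonlinearity polynomial `𝔫_f`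
satisfies `|c_v| ≤ 2^n`. -/
theorem stmt7 (n : ℕ) (f : (Fin n → ZMod 2) → ZMod 2)
    (N : MvPolynomial (Fin (n + 1)) ℚ)
    (hdeg : ∀ i : Fin (n + 1), N.degreeOf i ≤ 1)
    (heval : ∀ a : Fin (n + 1) → ZMod 2,
      MvPolynomial.eval (fun i => ((a i).val : ℚ)) N =
        (hammingDist f (affineFun n a) : ℚ)) :
    ∀ d : Fin (n + 1) →₀ ℕ, |N.coeff d| ≤ 2 ^ n := by
  have hN : IsNonlinearityPolynomial f N := ⟨hdeg, heval⟩
  intro d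
  by_cases hd : ∀ i, d i ≤ 1
  · rcases eq_or_ne d 0 with rfl | hd0
    · exact hN.abs_coeff_zero_le
    · exact hN.abs_coeff_le_of_ne_zero hd hd0
  · obtain ⟨i, hi⟩ := not_forall.1 hd
    rw [coeff_eq_zero_of_degreeOf_lt ((hdeg i).trans_lt (not_le.1 hi)), abs_zero]
    positivity
end
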